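/- arXiv:2507.17350 — 4 statements merged into one kernel-verified Lean document; each statement's English description precedes it below -/
import Mathlib

section
/- Let d ≥ 1, let γ : (0,∞) → ℝ^{d×d} be Bochner integrable and let Σ ∈ ℝ^{d×d} be symmetric. Then for every ω ∈ ℝ, the Fourier transform of γ_Σ satisfies γ̂_Σ(ω) = Lγ(iω) Σ + Σ (Lγ(iω))^*, where Lγ(iω) = ∫₀^∞ e^{−iωt} γ(t) dt and ^* denotes the conjugate transpose. -/
open MeasureTheory Matrix Set Filter
open scoped Matrix.Norms.L2Operator Real Topology ComplexOrder

noncomputable section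

/-- The function `γ_Σ` built from a memory kernel `γ` and a symmetric matrix `Σ`:
`γ_Σ(t) = γ(t)Σ` for `t > 0`, `γ_Σ(t) = Σ γ(-t)ᵀ` for `t < 0`,
and `γ_Σ(0) = (γ(0)Σ + Σγ(0)ᵀ)/2`. -/
def gammaSigma {d : ℕ} (γ : ℝ → Matrix (Fin d) (Fin d) ℝ) (S : Matrix (Fin d) (Fin d) ℝ)
    (t : ℝ) : Matrix (Fin d) (Fin d) ℝ :=
  if 0 < t then γ t * S
  else if t < 0 then S * (γ (-t))ᵀ
  else (2 : ℝ)⁻¹ • (γ 0 * S + S * (γ 0)ᵀ)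

/-- Entrywise Fourier transform `ĥ(ω) = ∫_ℝ e^{-iωt} h(t) dt` of a matrix-valued function. -/
def fourierMat {d : ℕ} (h : ℝ → Matrix (Fin d) (Fin d) ℝ) (ω : ℝ) :
    Matrix (Fin d) (Fin d) ℂ :=
  ∫ t : ℝ, Complex.exp (-(Complex.I * ω * t)) • (h t).map Complex.ofReal

/-- Entrywise Laplace transform `Lγ(ζ) = ∫₀^∞ e^{-ζt} γ(t) dt` of a matrix-valued function. -/
def laplaceMat {d : ℕ} (γ : ℝ → Matrix (Fin d) (Fin d) ℝ) (z : ℂ) :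
    Matrix (Fin d) (Fin d) ℂ :=
  ∫ t in Ioi (0 : ℝ), Complex.exp (-(z * t)) • (γ t).map Complex.ofReal

/-!
On `t > 0` the Fourier integrand of `γ_Σ` is `e^{-iωt} γ(t) Σ`; on `t < 0` it is
`Σ (e^{-iω|t|} γ(|t|))^*`, because complex conjugation turns `e^{-iω|t|}` into `e^{-iωt}`.
Splitting the integral over `ℝ` at the null set `{0}` and reflecting the negative half-line
turns both pieces into Laplace integrals over `(0, ∞)` evaluated at `iω`.
-/

open Complex

theorem Matrix.map_ofReal_mul {m n o : Type*} [Fintype n] (A : Matrix m n ℝ) (B : Matrix n o ℝ) :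
    (A * B).map ofReal = A.map ofReal * B.map ofReal :=
  Matrix.map_mul (f := ofRealHom)

theorem MeasureTheory.Integrable.matrix_map_ofReal {α m n : Type*} [MeasurableSpace α]
    {μ : Measure α} [Fintype m] [Fintype n] [DecidableEq m] [DecidableEq n] {γ : α → Matrix m n ℝ}
    (hγ : Integrable γ μ) : Integrable (fun t => (γ t).map Complex.ofReal) μ :=
  (LinearMap.toContinuousLinearMap
    (ofRealLI.toLinearMap.mapMatrix : Matrix m n ℝ →ₗ[ℝ] Matrix m n ℂ)).integrable_comp hγ

theorem Matrix.integral_conjTranspose {α n : Type*} [MeasurableSpace α] {μ : Measure α}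
    [Fintype n] [DecidableEq n] (f : α → Matrix n n ℂ) :
    ∫ t, (f t)ᴴ ∂μ = (∫ t, f t ∂μ)ᴴ :=
  (starL' ℝ : Matrix n n ℂ ≃L[ℝ] Matrix n n ℂ).integral_comp_comm f

theorem MeasureTheory.Integrable.conjTranspose {α n : Type*} [MeasurableSpace α]
    {μ : Measure α} [Fintype n] [DecidableEq n] {f : α → Matrix n n ℂ} (hf : Integrable f μ) :
    Integrable (fun t => (f t)ᴴ) μ :=
  (starL' ℝ : Matrix n n ℂ ≃L[ℝ] Matrix n n ℂ).toContinuousLinearMap.integrable_comp hf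

theorem integral_eq_setIntegral_Ioi_add_setIntegral_Ioi_of_eqOn {E : Type*}
    [NormedAddCommGroup E] [NormedSpace ℝ E] {f g h : ℝ → E}
    (hg : IntegrableOn g (Ioi 0)) (hh : IntegrableOn h (Ioi 0))
    (hfg : EqOn f g (Ioi 0)) (hfh : EqOn (fun t => f (-t)) h (Ioi 0)) :
    ∫ t, f t = (∫ t in Ioi 0, g t) + ∫ t in Ioi 0, h t := by
  have hf_Ioi : IntegrableOn f (Ioi 0) := hg.congr_fun hfg.symm measurableSet_Ioi
  have hf_Iic : IntegrableOn f (Iic 0) := by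
    have hf_neg : IntegrableOn (f ∘ Neg.neg) (Neg.neg ⁻¹' Iio 0) := by
      simpa [Function.comp_def] using hh.congr_fun hfh.symm measurableSet_Ioi
    rw [integrableOn_Iic_iff_integrableOn_Iio]
    exact ((Measure.measurePreserving_neg volume).integrableOn_comp_preimage
      measurableEmbedding_neg).1 hf_neg
  rw [← intervalIntegral.integral_Iic_add_Ioi hf_Iic hf_Ioi, add_comm,
    ← neg_zero, ← integral_comp_neg_Ioi, neg_zero,
    setIntegral_congr_fun measurableSet_Ioi hfg, setIntegral_congr_fun measurableSet_Ioi hfh]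

/-- `laplaceMat γ z` and `fourierMat h ω` are, by definition, the integrals of
`laplaceIntegrand γ z` over `(0, ∞)` and of `laplaceIntegrand h (I * ω)` over `ℝ`. -/
def laplaceIntegrand {d : ℕ} (γ : ℝ → Matrix (Fin d) (Fin d) ℝ) (z : ℂ) (t : ℝ) :
    Matrix (Fin d) (Fin d) ℂ :=
  exp (-(z * t)) • (γ t).map ofReal

section laplaceIntegrand

variable {d : ℕ} {γ : ℝ → Matrix (Fin d) (Fin d) ℝ}

theorem integrableOn_laplaceIntegrand (hγ : IntegrableOn γ (Ioi 0)) {z : ℂ} (hz : 0 ≤ z.re) :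
    IntegrableOn (laplaceIntegrand γ z) (Ioi 0) := by
  refine hγ.matrix_map_ofReal.bdd_smul (φ := fun t : ℝ => exp (-(z * t))) 1
    (by fun_prop) ((ae_restrict_mem measurableSet_Ioi).mono fun t ht => ?_)
  rw [norm_exp, Real.exp_le_one_iff, neg_re, re_mul_ofReal, neg_nonpos]
  exact mul_nonneg hz (le_of_lt ht)

variable (S : Matrix (Fin d) (Fin d) ℝ)

theorem laplaceIntegrand_gammaSigma_of_pos (z : ℂ) {t : ℝ} (ht : 0 < t) :
    laplaceIntegrand (gammaSigma γ S) z t = laplaceIntegrand γ z t * S.map ofReal := by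
  rw [laplaceIntegrand, laplaceIntegrand, gammaSigma, if_pos ht,
    Matrix.map_ofReal_mul, smul_mul_assoc]

theorem laplaceIntegrand_gammaSigma_of_neg (ω : ℝ) {t : ℝ} (ht : t < 0) :
    laplaceIntegrand (gammaSigma γ S) (I * ω) t =
      S.map ofReal * (laplaceIntegrand γ (I * ω) (-t))ᴴ := by
  have hconj : star (exp (-(I * ω * ↑(-t)))) = exp (-(I * ω * t)) := by
    rw [star_def, ← exp_conj]
    congr 1
    simp [conj_ofReal]
  rw [laplaceIntegrand, laplaceIntegrand, gammaSigma, if_neg ht.not_gt, if_pos ht,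
    conjTranspose_smul, hconj, mul_smul_comm, Matrix.map_ofReal_mul,
    ← conjTranspose_map _ fun x => by simp, conjTranspose_eq_transpose_of_trivial]

end laplaceIntegrand

theorem fourier_gammaSigma_eq_laplace_general {d : ℕ}
    (γ : ℝ → Matrix (Fin d) (Fin d) ℝ) (hγ : IntegrableOn γ (Ioi 0))
    (S : Matrix (Fin d) (Fin d) ℝ) :
    ∀ ω : ℝ,
      fourierMat (gammaSigma γ S) ω =
        laplaceMat γ (Complex.I * ω) * S.map Complex.ofReal +
          S.map Complex.ofReal * (laplaceMat γ (Complex.I * ω))ᴴ := by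
  intro ω
  have hL : IntegrableOn (laplaceIntegrand γ (I * ω)) (Ioi 0) :=
    integrableOn_laplaceIntegrand hγ (by simp)
  calc fourierMat (gammaSigma γ S) ω
      = ∫ t, laplaceIntegrand (gammaSigma γ S) (I * ω) t := rfl
    _ = (∫ t in Ioi 0, laplaceIntegrand γ (I * ω) t * S.map ofReal) +
          ∫ t in Ioi 0, S.map ofReal * (laplaceIntegrand γ (I * ω) t)ᴴ := by
      refine integral_eq_setIntegral_Ioi_add_setIntegral_Ioi_of_eqOn (hL.mul_const _)
        (hL.conjTranspose.const_mul _) (fun t ht => ?_) (fun t ht => ?_)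
      · exact laplaceIntegrand_gammaSigma_of_pos S _ ht
      · simpa using laplaceIntegrand_gammaSigma_of_neg S ω (neg_neg_iff_pos.2 ht)
    _ = laplaceMat γ (I * ω) * S.map ofReal + S.map ofReal * (laplaceMat γ (I * ω))ᴴ := by
      rw [integral_mul_const_of_integrable hL, integral_const_mul_of_integrable hL.conjTranspose,
        Matrix.integral_conjTranspose]
      rfl

/-- `γ̂_Σ(ω) = Lγ(iω) Σ + Σ (Lγ(iω))^*` for every `ω ∈ ℝ`. -/
theorem fourier_gammaSigma_eq_laplace {d : ℕ} (hd : 1 ≤ d)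
    (γ : ℝ → Matrix (Fin d) (Fin d) ℝ) (hγ : IntegrableOn γ (Ioi 0))
    (S : Matrix (Fin d) (Fin d) ℝ) (hS : S.IsSymm) :
    ∀ ω : ℝ,
      fourierMat (gammaSigma γ S) ω =
        laplaceMat γ (Complex.I * ω) * S.map Complex.ofReal +
          S.map Complex.ofReal * (laplaceMat γ (Complex.I * ω))ᴴ :=
  fourier_gammaSigma_eq_laplace_general γ hγ S
end
end

section
/- Let d ≥ 1, let D ∈ ℝ^{d×d}, let γ : (0,∞) → ℝ^{d×d} be Bochner integrable, and let Σ ∈ ℝ^{d×d} be symmetric positive definite. Assume that D Σ + Σ Dᵀ + γ̂_Σ(ω) is positive definite for every ω ∈ ℝ. Then for every ζ ∈ ℂ with Re ζ ≥ 0 the matrix A(ζ) = ζ I + D + Lγ(ζ) ∈ ℂ^{d×d} is invertible. -/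
open MeasureTheory Matrix Set Filter
open scoped Matrix.Norms.L2Operator Real Topology ComplexOrder

noncomputable section

open Complex FourierTransform ProbabilityTheory
open scoped NNReal

/-!
If `A(ζ)` were singular, some `x ≠ 0` would satisfy `x* A(ζ) = 0`, hence `x* A(ζ) Σ x = 0`.
Write `ζ = σ + iω`. On `t > 0` the Laplace integrand of `Lγ(ζ) Σ` is the Fourier integrand of
`h_σ(t) = e^{-σ|t|} γ_Σ(t)`, and its adjoint is the same integrand at `-t`; hence
`A(ζ)Σ + (A(ζ)Σ)* = 2σ Σ + DΣ + ΣDᵀ + ĥ_σ(ω)`. Since `e^{-σ|t|}` is the Fourier transform of the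
Cauchy density `P_σ`, Fubini shows that `DΣ + ΣDᵀ + ĥ_σ(ω)` is the `P_σ`-average of the positive
definite matrices `DΣ + ΣDᵀ + γ̂_Σ(ω + u)`. So `Re (x* A(ζ) Σ x) > 0`, a contradiction.
-/

lemma integrable_exp_neg_mul_abs {σ : ℝ} (hσ : 0 < σ) :
    Integrable fun t : ℝ => rexp (-(σ * |t|)) := by
  rw [← integrableOn_univ, ← Iic_union_Ioi (a := 0), integrableOn_union]
  constructor
  · refine (integrableOn_exp_mul_Iic hσ 0).congr_fun (fun t ht => ?_) measurableSet_Iic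
    simp only [abs_of_nonpos (mem_Iic.1 ht), mul_neg, neg_neg]
  · refine (integrableOn_exp_mul_Ioi (neg_neg_of_pos hσ) 0).congr_fun (fun t ht => ?_)
      measurableSet_Ioi
    simp only [abs_of_pos (mem_Ioi.1 ht), neg_mul]

lemma fourier_exp_neg_mul_abs {σ : ℝ≥0} (hσ : σ ≠ 0) (w : ℝ) :
    𝓕 (fun t : ℝ => (rexp (-(σ * |t|)) : ℂ)) w = 2 * π * cauchyPDFReal 0 σ (2 * π * w) := by
  have hσ' : (0 : ℝ) < σ := NNReal.coe_pos.2 (pos_iff_ne_zero.2 hσ)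
  set a : ℂ := -(2 * π * w : ℝ) * I
  have hIoi : ∀ t ∈ Ioi (0 : ℝ),
      cexp (↑(-2 * π * t * w) * I) • (rexp (-(σ * |t|)) : ℂ) = cexp ((a - σ) * t) := by
    intro t ht
    rw [abs_of_pos ht, smul_eq_mul, ofReal_exp, ← Complex.exp_add]
    congr 1
    push_cast [a]
    ring
  have hIic : ∀ t ∈ Iic (0 : ℝ),
      cexp (↑(-2 * π * t * w) * I) • (rexp (-(σ * |t|)) : ℂ) = cexp ((a + σ) * t) := by
    intro t ht
    rw [abs_of_nonpos ht, smul_eq_mul, ofReal_exp, ← Complex.exp_add]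
    congr 1
    push_cast [a]
    ring
  have hre₁ : (a - σ).re < 0 := by simp [a, hσ']
  have hre₂ : 0 < (a + σ).re := by simp [a, hσ']
  rw [Real.fourier_real_eq_integral_exp_smul, ← intervalIntegral.integral_Iic_add_Ioi
    ((integrableOn_exp_mul_complex_Iic hre₂ 0).congr_fun (fun t ht => (hIic t ht).symm)
      measurableSet_Iic)
    ((integrableOn_exp_mul_complex_Ioi hre₁ 0).congr_fun (fun t ht => (hIoi t ht).symm)
      measurableSet_Ioi),
    setIntegral_congr_fun measurableSet_Iic hIic, setIntegral_congr_fun measurableSet_Ioi hIoi,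
    integral_exp_mul_complex_Iic hre₂, integral_exp_mul_complex_Ioi hre₁, cauchyPDFReal]
  have ha : a ^ 2 = -((2 * π * w : ℝ) : ℂ) ^ 2 := by simp [a, mul_pow]
  have hd : ((2 * π * w : ℝ) : ℂ) ^ 2 + (σ : ℂ) ^ 2 ≠ 0 := by exact_mod_cast (by positivity)
  have h₁ : a + σ ≠ 0 := fun h => by simp [h] at hre₂
  have h₂ : a - σ ≠ 0 := fun h => by simp [h] at hre₁
  calc cexp ((a + σ) * (0 : ℝ)) / (a + σ) + -cexp ((a - σ) * (0 : ℝ)) / (a - σ)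
      = 2 * σ / (σ ^ 2 - a ^ 2) := by
        rw [ofReal_zero, mul_zero, mul_zero, Complex.exp_zero]
        rw [div_add_div _ _ h₁ h₂,
          div_eq_div_iff (mul_ne_zero h₁ h₂) (by rwa [ha, sub_neg_eq_add, add_comm])]
        ring
    _ = _ := by
        rw [ha, sub_neg_eq_add, sub_zero]
        push_cast
        field_simp
        ring

lemma integral_cauchyPDFReal_mul_cexp {σ : ℝ≥0} (hσ : σ ≠ 0) (t : ℝ) :
    ∫ u : ℝ, (cauchyPDFReal 0 σ u : ℂ) * cexp (-(I * u * t)) = rexp (-(σ * |t|)) := by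
  set f : ℝ → ℂ := fun t => (rexp (-(σ * |t|)) : ℂ)
  have hf : Integrable f :=
    (integrable_exp_neg_mul_abs (NNReal.coe_pos.2 (pos_iff_ne_zero.2 hσ))).ofReal
  have h𝓕f : 𝓕 f = fun w => 2 * π * (cauchyPDFReal 0 σ (2 * π * w) : ℂ) :=
    funext (fourier_exp_neg_mul_abs hσ)
  have h𝓕f_int : Integrable (𝓕 f) := by
    rw [h𝓕f]
    exact (((integrable_cauchyPDFReal 0).comp_mul_left' (by positivity)).ofReal).const_mul _
  have hinv := hf.fourierInv_fourier_eq h𝓕f_int (by fun_prop : Continuous f).continuousAt (v := -t)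
  rw [Real.fourierInv_eq_fourier_neg, neg_neg, Real.fourier_real_eq_integral_exp_smul, h𝓕f]
    at hinv
  set g : ℝ → ℂ := fun u => (cauchyPDFReal 0 σ u : ℂ) * cexp (-(I * u * t))
  have hg : ∀ v : ℝ, cexp (↑(-2 * π * v * t) * I) • (2 * π * (cauchyPDFReal 0 σ (2 * π * v) : ℂ))
      = (2 * π : ℝ) • g (2 * π * v) := by
    intro v
    simp only [g, smul_eq_mul, real_smul]
    push_cast
    ring_nf
  simp only [hg, integral_smul, Measure.integral_comp_mul_left g, smul_smul, f, abs_neg] at hinv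
  rwa [abs_of_pos (by positivity : (0 : ℝ) < (2 * π)⁻¹), mul_inv_cancel₀ (by positivity),
    one_smul] at hinv

lemma norm_cexp_neg_I_mul_mul (a b : ℝ) : ‖cexp (-(I * a * b))‖ = 1 := by
  simp [Complex.norm_exp]

section

variable {E : Type*} [NormedAddCommGroup E] [NormedSpace ℂ E]

lemma integrable_cexp_neg_I_mul_smul {h : ℝ → E} (hh : Integrable h) (ω : ℝ) :
    Integrable fun t : ℝ => cexp (-(I * ω * t)) • h t :=
  hh.bdd_smul 1 (by fun_prop : Continuous fun t : ℝ => cexp (-(I * ω * t))).aestronglyMeasurable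
    (.of_forall fun t => (norm_cexp_neg_I_mul_mul ω t).le)

lemma integrableOn_cexp_neg_mul_smul_Ioi {h : ℝ → E} (hh : IntegrableOn h (Ioi 0)) {ζ : ℂ}
    (hζ : 0 ≤ ζ.re) : IntegrableOn (fun t : ℝ => cexp (-(ζ * t)) • h t) (Ioi 0) := by
  refine hh.bdd_smul 1 (by fun_prop : Continuous fun t : ℝ => cexp (-(ζ * t))).aestronglyMeasurable
    ((ae_restrict_iff' measurableSet_Ioi).2 (.of_forall fun t ht => ?_))
  rw [Complex.norm_exp, Real.exp_le_one_iff, neg_re, neg_nonpos, re_mul_ofReal]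
  exact mul_nonneg hζ (le_of_lt ht)

lemma integrable_cauchyPDFReal_smul_cexp_smul {h : ℝ → E} (hh : Integrable h) (σ : ℝ≥0)
    (ω : ℝ) :
    Integrable (fun p : ℝ × ℝ => cauchyPDFReal 0 σ p.1 • cexp (-(I * ↑(ω + p.1) * p.2)) • h p.2)
      (volume.prod volume) := by
  have hcont : Continuous fun p : ℝ × ℝ => cexp (-(I * ↑(ω + p.1) * p.2)) := by fun_prop
  refine (((integrable_cauchyPDFReal 0 (γ := σ)).smul_prod hh).bdd_smul 1 hcont.aestronglyMeasurable
    (.of_forall fun p => (norm_cexp_neg_I_mul_mul _ _).le)).congr (.of_forall fun p => ?_)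
  simp only [Pi.smul_apply']
  rw [smul_comm]

lemma integrable_cauchyPDFReal_smul_fourier {h : ℝ → E} (hh : Integrable h) (σ : ℝ≥0)
    (ω : ℝ) :
    Integrable fun u : ℝ => cauchyPDFReal 0 σ u • ∫ t : ℝ, cexp (-(I * ↑(ω + u) * t)) • h t := by
  simpa only [integral_smul] using
    (integrable_cauchyPDFReal_smul_cexp_smul hh σ ω).integral_prod_left

variable [CompleteSpace E]

lemma integral_cauchyPDFReal_smul_fourier {h : ℝ → E} (hh : Integrable h) {σ : ℝ≥0}
    (hσ : σ ≠ 0) (ω : ℝ) :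
    ∫ u, cauchyPDFReal 0 σ u • ∫ t : ℝ, cexp (-(I * ↑(ω + u) * t)) • h t
      = ∫ t : ℝ, cexp (-(I * ω * t)) • (rexp (-(σ * |t|)) • h t) := by
  have hsplit : ∀ u t : ℝ, cauchyPDFReal 0 σ u • cexp (-(I * ↑(ω + u) * t)) • h t
      = ((cauchyPDFReal 0 σ u : ℂ) * cexp (-(I * u * t))) • cexp (-(I * ω * t)) • h t := by
    intro u t
    rw [smul_smul, ← smul_assoc, real_smul, mul_assoc (cauchyPDFReal 0 σ u : ℂ),
      ← Complex.exp_add]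
    congr 3
    push_cast
    ring
  simp_rw [← integral_smul]
  rw [integral_integral_swap (f := fun u t : ℝ =>
    cauchyPDFReal 0 σ u • cexp (-(I * ↑(ω + u) * t)) • h t)
    (integrable_cauchyPDFReal_smul_cexp_smul hh σ ω)]
  simp_rw [hsplit, integral_smul_const, integral_cauchyPDFReal_mul_cexp hσ, Complex.coe_smul,
    smul_comm (rexp _)]

end

namespace Matrix

variable {m n o : Type*}

lemma map_ofReal_mul_s3 [Fintype n] (A : Matrix m n ℝ) (B : Matrix n o ℝ) :
    (A * B).map ofReal = A.map ofReal * B.map ofReal :=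
  Matrix.map_mul (f := ofRealHom)

lemma map_ofReal_add (A B : Matrix m n ℝ) :
    (A + B).map ofReal = A.map ofReal + B.map ofReal :=
  Matrix.map_add _ ofReal_add A B

lemma map_ofReal_smul (r : ℝ) (A : Matrix m n ℝ) :
    (r • A).map ofReal = r • A.map ofReal :=
  Matrix.map_smul _ r (fun a => by simp [real_smul]) A

lemma conjTranspose_map_ofReal (A : Matrix m n ℝ) : (A.map ofReal)ᴴ = Aᵀ.map ofReal := by
  ext
  simp

lemma re_dotProduct_map_ofReal_mulVec [Fintype n] (S : Matrix n n ℝ) (x : n → ℂ) :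
    (star x ⬝ᵥ S.map ofReal *ᵥ x).re
      = (fun i => (x i).re) ⬝ᵥ S *ᵥ (fun i => (x i).re)
        + (fun i => (x i).im) ⬝ᵥ S *ᵥ (fun i => (x i).im) := by
  simp only [dotProduct, mulVec, Finset.mul_sum, ← Finset.sum_add_distrib, re_sum]
  refine Finset.sum_congr rfl fun i _ => Finset.sum_congr rfl fun j _ => ?_
  simp [mul_re, mul_im]

lemma PosSemidef.re_dotProduct_map_ofReal_mulVec_nonneg [Fintype n] {S : Matrix n n ℝ}
    (hS : S.PosSemidef) (x : n → ℂ) : 0 ≤ (star x ⬝ᵥ S.map ofReal *ᵥ x).re := by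
  rw [re_dotProduct_map_ofReal_mulVec]
  exact add_nonneg (by simpa using hS.dotProduct_mulVec_nonneg _)
    (by simpa using hS.dotProduct_mulVec_nonneg _)

lemma re_dotProduct_conjTranspose_mulVec [Fintype n] (M : Matrix n n ℂ) (x : n → ℂ) :
    (star x ⬝ᵥ Mᴴ *ᵥ x).re = (star x ⬝ᵥ M *ᵥ x).re := by
  rw [dotProduct_mulVec, ← star_mulVec, star_dotProduct]
  exact conj_re _

lemma isUnit_of_re_dotProduct_mul_mulVec_pos [Fintype n] [DecidableEq n] {A B : Matrix n n ℂ}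
    (h : ∀ x ≠ 0, 0 < (star x ⬝ᵥ (A * B) *ᵥ x).re) : IsUnit A := by
  rw [isUnit_iff_isUnit_det, isUnit_iff_ne_zero]
  intro hdet
  obtain ⟨v, hv, hvA⟩ := exists_vecMul_eq_zero_iff.2 hdet
  have hpos := h (star v) (star_ne_zero.2 hv)
  rw [star_star, ← mulVec_mulVec, dotProduct_mulVec, hvA, zero_dotProduct, zero_re] at hpos
  exact hpos.false

end Matrix

section MatrixIntegral

variable {X : Type*} [MeasurableSpace X] {μ : Measure X} {n : Type*} [Fintype n] [DecidableEq n]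

def Matrix.dotProductMulVecCLM (x y : n → ℂ) : Matrix n n ℂ →L[ℂ] ℂ :=
  LinearMap.toContinuousLinearMap
    { toFun M := x ⬝ᵥ M *ᵥ y
      map_add' M N := by simp [add_mulVec]
      map_smul' c M := by simp [smul_mulVec] }

lemma MeasureTheory.Integrable.dotProduct_mulVec {G : X → Matrix n n ℂ} (hG : Integrable G μ)
    (x y : n → ℂ) : Integrable (fun a => x ⬝ᵥ G a *ᵥ y) μ :=
  (Matrix.dotProductMulVecCLM x y).integrable_comp hG

lemma Matrix.dotProduct_integral_mulVec {G : X → Matrix n n ℂ} (hG : Integrable G μ)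
    (x y : n → ℂ) : x ⬝ᵥ (∫ a, G a ∂μ) *ᵥ y = ∫ a, x ⬝ᵥ G a *ᵥ y ∂μ :=
  ((Matrix.dotProductMulVecCLM x y).integral_comp_comm hG).symm

lemma MeasureTheory.Integrable.matrix_map_ofReal_s3 {f : X → Matrix n n ℝ} (hf : Integrable f μ) :
    Integrable (fun a => (f a).map Complex.ofReal) μ :=
  (LinearMap.toContinuousLinearMap
    (ofRealCLM.toLinearMap.mapMatrix (m := n) (n := n))).integrable_comp hf

end MatrixIntegral

lemma re_dotProduct_add_fourierMat_exp_smul_mulVec_pos {d : ℕ} {C : Matrix (Fin d) (Fin d) ℂ}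
    {h : ℝ → Matrix (Fin d) (Fin d) ℝ} (hh : Integrable h)
    (hpos : ∀ ω, (C + fourierMat h ω).PosDef) {σ : ℝ} (hσ : 0 ≤ σ) (ω : ℝ) {x : Fin d → ℂ}
    (hx : x ≠ 0) :
    0 < (star x ⬝ᵥ (C + fourierMat (fun t => rexp (-(σ * |t|)) • h t) ω) *ᵥ x).re := by
  lift σ to ℝ≥0 using hσ
  rcases eq_or_ne σ 0 with rfl | hσ
  · simpa using (hpos ω).re_dotProduct_pos hx
  have hH : Integrable fun t => (h t).map Complex.ofReal := hh.matrix_map_ofReal_s3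
  have hK : Integrable fun u => cauchyPDFReal 0 σ u • fourierMat h (ω + u) :=
    integrable_cauchyPDFReal_smul_fourier hH σ ω
  have hG : Integrable fun u => cauchyPDFReal 0 σ u • (C + fourierMat h (ω + u)) := by
    simp_rw [smul_add]
    exact ((integrable_cauchyPDFReal 0).smul_const C).add hK
  have hsmooth : C + fourierMat (fun t => rexp (-(σ * |t|)) • h t) ω
      = ∫ u, cauchyPDFReal 0 σ u • (C + fourierMat h (ω + u)) := by
    simp_rw [smul_add]
    rw [integral_add ((integrable_cauchyPDFReal 0).smul_const C) hK, integral_smul_const,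
      integral_cauchyPDFReal_eq_one 0 hσ, one_smul]
    simp only [fourierMat, integral_cauchyPDFReal_smul_fourier hH hσ ω, Matrix.map_ofReal_smul]
  have hq : ∀ u, (star x ⬝ᵥ (cauchyPDFReal 0 σ u • (C + fourierMat h (ω + u))) *ᵥ x).re
      = cauchyPDFReal 0 σ u * (star x ⬝ᵥ (C + fourierMat h (ω + u)) *ᵥ x).re := by
    intro u
    rw [smul_mulVec, dotProduct_smul, real_smul, re_ofReal_mul]
  have hq_pos : ∀ u, 0 < cauchyPDFReal 0 σ u * (star x ⬝ᵥ (C + fourierMat h (ω + u)) *ᵥ x).re :=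
    fun u => mul_pos (cauchyPDF_pos 0 hσ u) ((hpos (ω + u)).re_dotProduct_pos hx)
  have hint := (hG.dotProduct_mulVec (star x) x).re
  rw [hsmooth, Matrix.dotProduct_integral_mulVec hG, ← RCLike.re_to_complex, ← integral_re
    (hG.dotProduct_mulVec (star x) x)]
  simp only [RCLike.re_to_complex, hq] at hint ⊢
  refine (integral_pos_iff_support_of_nonneg (fun u => (hq_pos u).le) hint).2 ?_
  rw [Function.support_eq_univ fun u => (hq_pos u).ne', Measure.measure_univ_pos]
  exact NeZero.ne _

lemma integrable_gammaSigma {d : ℕ} {γ : ℝ → Matrix (Fin d) (Fin d) ℝ} (hγ : IntegrableOn γ (Ioi 0))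
    (S : Matrix (Fin d) (Fin d) ℝ) : Integrable (gammaSigma γ S) := by
  let transposeCLM : Matrix (Fin d) (Fin d) ℝ →L[ℝ] Matrix (Fin d) (Fin d) ℝ :=
    LinearMap.toContinuousLinearMap (transposeLinearEquiv (Fin d) (Fin d) ℝ ℝ).toLinearMap
  have hγneg : IntegrableOn (fun t => γ (-t)) (Iio 0) := by
    rw [← neg_zero] at hγ
    exact hγ.comp_neg_Iio
  rw [← integrableOn_univ, ← Iio_union_Ici (a := 0), integrableOn_union,
    integrableOn_Ici_iff_integrableOn_Ioi]
  constructor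
  · refine IntegrableOn.congr_fun ((transposeCLM.integrable_comp hγneg).const_mul S)
      (fun t ht => ?_) measurableSet_Iio
    simp [gammaSigma, transposeCLM, mem_Iio.1 ht, not_lt_of_gt (mem_Iio.1 ht)]
  · exact IntegrableOn.congr_fun (hγ.mul_const S)
      (fun t ht => by simp [gammaSigma, mem_Ioi.1 ht]) measurableSet_Ioi

lemma laplaceMat_mul_add_conjTranspose {d : ℕ} {γ : ℝ → Matrix (Fin d) (Fin d) ℝ}
    (hγ : IntegrableOn γ (Ioi 0)) {S : Matrix (Fin d) (Fin d) ℝ} (hS : Sᵀ = S) {ζ : ℂ}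
    (hζ : 0 ≤ ζ.re) :
    laplaceMat γ ζ * S.map ofReal + (laplaceMat γ ζ * S.map ofReal)ᴴ
      = fourierMat (fun t => rexp (-(ζ.re * |t|)) • gammaSigma γ S t) ζ.im := by
  set ℓ : ℝ → Matrix (Fin d) (Fin d) ℂ := fun t => cexp (-(ζ * t)) • (γ t).map ofReal
  set F : ℝ → Matrix (Fin d) (Fin d) ℂ := fun t =>
    cexp (-(I * ζ.im * t)) • (rexp (-(ζ.re * |t|)) • gammaSigma γ S t).map ofReal
  have hdecomp : ∀ t : ℝ, cexp (-(ζ * t)) = cexp (-(I * ζ.im * t)) * rexp (-(ζ.re * t)) := by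
    intro t
    conv_lhs => rw [← re_add_im ζ]
    rw [ofReal_exp, ← Complex.exp_add]
    congr 1
    push_cast
    ring
  have hℓ : IntegrableOn ℓ (Ioi 0) :=
    integrableOn_cexp_neg_mul_smul_Ioi hγ.matrix_map_ofReal_s3 hζ
  have hF : Integrable F := by
    refine integrable_cexp_neg_I_mul_smul (((integrable_gammaSigma hγ S).bdd_smul 1
      (by fun_prop : Continuous fun t : ℝ => rexp (-(ζ.re * |t|))).aestronglyMeasurable
      (.of_forall fun t => ?_)).matrix_map_ofReal_s3) ζ.im
    rw [Real.norm_eq_abs, Real.abs_exp, Real.exp_le_one_iff, neg_nonpos]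
    positivity
  have hF_pos : ∀ t ∈ Ioi (0 : ℝ), F t = ℓ t * S.map ofReal := by
    intro t ht
    simp only [F, ℓ, gammaSigma, if_pos (mem_Ioi.1 ht), abs_of_pos (mem_Ioi.1 ht),
      Matrix.map_ofReal_smul, Matrix.map_ofReal_mul_s3, smul_mul_assoc, hdecomp, mul_smul,
      Complex.coe_smul]
  have hF_neg : ∀ t ∈ Ioi (0 : ℝ), F (-t) = (ℓ t * S.map ofReal)ᴴ := by
    intro t ht
    have ht' : -t < 0 := neg_neg_of_pos ht
    simp only [F, ℓ, gammaSigma, if_neg (not_lt_of_gt ht'), if_pos ht', abs_neg, neg_neg,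
      abs_of_pos (mem_Ioi.1 ht), Matrix.map_ofReal_smul, Matrix.map_ofReal_mul_s3,
      conjTranspose_mul, conjTranspose_smul, Matrix.conjTranspose_map_ofReal, hS,
      Matrix.mul_smul, hdecomp, mul_smul, Complex.coe_smul]
    rw [star_trivial (rexp _), Complex.star_def, ← Complex.exp_conj]
    congr 2
    simp only [map_neg, map_mul, conj_I, conj_ofReal]
    push_cast
    ring
  have hL : laplaceMat γ ζ * S.map ofReal = ∫ t in Ioi 0, ℓ t * S.map ofReal :=
    (integral_mul_const_of_integrable hℓ).symm
  have hLH : (laplaceMat γ ζ * S.map ofReal)ᴴ = ∫ t in Ioi 0, (ℓ t * S.map ofReal)ᴴ := by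
    rw [hL]
    exact ((starL' ℝ).integral_comp_comm _).symm
  change _ = ∫ t, F t
  rw [← intervalIntegral.integral_Iic_add_Ioi (b := 0) hF.integrableOn hF.integrableOn, ← neg_zero,
    ← integral_comp_neg_Ioi, neg_zero, setIntegral_congr_fun measurableSet_Ioi hF_neg,
    setIntegral_congr_fun measurableSet_Ioi hF_pos, hLH, hL, add_comm]

lemma re_dotProduct_mul_mulVec_pos {d : ℕ} (D : Matrix (Fin d) (Fin d) ℝ)
    {γ : ℝ → Matrix (Fin d) (Fin d) ℝ} (hγ : IntegrableOn γ (Ioi 0))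
    {S : Matrix (Fin d) (Fin d) ℝ} (hS : S.PosDef)
    (hpos : ∀ ω : ℝ,
      ((D * S + S * Dᵀ).map ofReal + fourierMat (gammaSigma γ S) ω).PosDef)
    {ζ : ℂ} (hζ : 0 ≤ ζ.re) {x : Fin d → ℂ} (hx : x ≠ 0) :
    0 < (star x ⬝ᵥ ((ζ • 1 + D.map ofReal + laplaceMat γ ζ) * S.map ofReal) *ᵥ x).re := by
  set A := ζ • (1 : Matrix (Fin d) (Fin d) ℂ) + D.map ofReal + laplaceMat γ ζ
  have hST : Sᵀ = S := by simpa using hS.isHermitian.eq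
  have hsum : A * S.map ofReal + (A * S.map ofReal)ᴴ = ((2 * ζ.re : ℝ) : ℂ) • S.map ofReal
      + ((D * S + S * Dᵀ).map ofReal
        + fourierMat (fun t => rexp (-(ζ.re * |t|)) • gammaSigma γ S t) ζ.im) := by
    rw [← laplaceMat_mul_add_conjTranspose hγ hST hζ]
    simp only [A, add_mul, conjTranspose_add, conjTranspose_mul, conjTranspose_smul,
      Matrix.conjTranspose_map_ofReal, hST, Matrix.map_ofReal_add, Matrix.map_ofReal_mul_s3,
      smul_mul_assoc, one_mul, ← add_conj ζ, add_smul]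
    simp only [star_def]
    abel
  have hlin : 2 * (star x ⬝ᵥ (A * S.map ofReal) *ᵥ x).re
      = 2 * ζ.re * (star x ⬝ᵥ S.map ofReal *ᵥ x).re
        + (star x ⬝ᵥ ((D * S + S * Dᵀ).map ofReal
          + fourierMat (fun t => rexp (-(ζ.re * |t|)) • gammaSigma γ S t) ζ.im) *ᵥ x).re := by
    rw [two_mul]
    nth_rewrite 2 [← Matrix.re_dotProduct_conjTranspose_mulVec]
    rw [← add_re, ← dotProduct_add, ← add_mulVec, hsum]
    simp only [add_mulVec, smul_mulVec, dotProduct_add, dotProduct_smul, add_re, smul_eq_mul,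
      re_ofReal_mul]
  have hsmooth := re_dotProduct_add_fourierMat_exp_smul_mulVec_pos (integrable_gammaSigma hγ S)
    hpos hζ ζ.im hx
  have hS_re := hS.posSemidef.re_dotProduct_map_ofReal_mulVec_nonneg x
  linarith [mul_nonneg hζ hS_re]

theorem paleyWiener_matrix_invertible_general {d : ℕ}
    (D : Matrix (Fin d) (Fin d) ℝ)
    (γ : ℝ → Matrix (Fin d) (Fin d) ℝ) (hγ : IntegrableOn γ (Ioi 0))
    (S : Matrix (Fin d) (Fin d) ℝ) (hS : S.PosDef)
    (hpos : ∀ ω : ℝ,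
      ((D * S + S * Dᵀ).map Complex.ofReal + fourierMat (gammaSigma γ S) ω).PosDef) :
    ∀ ζ : ℂ, 0 ≤ ζ.re →
      IsUnit (ζ • (1 : Matrix (Fin d) (Fin d) ℂ) + D.map Complex.ofReal + laplaceMat γ ζ) :=
  fun _ hζ => Matrix.isUnit_of_re_dotProduct_mul_mulVec_pos fun _ hx =>
    re_dotProduct_mul_mulVec_pos D hγ hS hpos hζ hx

/-- Paley–Wiener criterion: if `D Σ + Σ Dᵀ + γ̂_Σ(ω)` is positive definite for
every `ω ∈ ℝ`, then `A(ζ) = ζ I + D + Lγ(ζ)` is invertible for every `ζ` with `Re ζ ≥ 0`. -/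
theorem paleyWiener_matrix_invertible {d : ℕ} (hd : 1 ≤ d)
    (D : Matrix (Fin d) (Fin d) ℝ)
    (γ : ℝ → Matrix (Fin d) (Fin d) ℝ) (hγ : IntegrableOn γ (Ioi 0))
    (S : Matrix (Fin d) (Fin d) ℝ) (hS : S.PosDef)
    (hpos : ∀ ω : ℝ,
      ((D * S + S * Dᵀ).map Complex.ofReal + fourierMat (gammaSigma γ S) ω).PosDef) :
    ∀ ζ : ℂ, 0 ≤ ζ.re →
      IsUnit (ζ • (1 : Matrix (Fin d) (Fin d) ℂ) + D.map Complex.ofReal + laplaceMat γ ζ) :=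
  paleyWiener_matrix_invertible_general D γ hγ S hS hpos
end
end

section
/- Let d ≥ 1, D ∈ ℝ^{d×d}, let γ : (0,∞) → ℝ^{d×d} be Bochner integrable on (0,∞), and let r be the differential resolvent of γ with drift matrix D. If r is Bochner integrable on (0,∞), then: (a) r′ is Bochner integrable on (0,∞), with ‖r′‖_{L¹} ≤ ‖D‖₂ ‖r‖_{L¹} + ‖γ‖_{L¹} ‖r‖_{L¹}; (b) r(t) tends to the zero matrix as t → ∞; (c) r is bounded on [0,∞); (d) r is square integrable on (0,∞). -/
/-!
The memory term `∫₀ᵗ γ(t-s) r(s) ds` is the forward convolution `posConvolution` of `r` and `γ`,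
whose `L¹` norm is at most `‖γ‖_{L¹} ‖r‖_{L¹}` by Fubini; the resolvent equation then puts `r'`
in `L¹`. A function that is integrable on `(0,∞)` together with its derivative tends to `0`, so
the continuous function `r` is bounded on `[0,∞)`, and a bounded `L¹` function is in `L²`.
-/

open MeasureTheory Matrix Set Filter
open scoped Matrix.Norms.L2Operator Real Topology ComplexOrder

noncomputable section

/-- `r` (with derivative `r'`) is the differential resolvent of the kernel `γ` with drift
matrix `D`: `r` is continuously differentiable on `[0,∞)`, `r(0) = I`, and
`r′(t) = -D r(t) - ∫₀ᵗ γ(t-s) r(s) ds = -r(t) D - ∫₀ᵗ r(t-s) γ(s) ds` for all `t ≥ 0`. -/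
structure IsDiffResolvent {d : ℕ} (D : Matrix (Fin d) (Fin d) ℝ)
    (γ r r' : ℝ → Matrix (Fin d) (Fin d) ℝ) : Prop where
  init : r 0 = 1
  hasDeriv : ∀ t ∈ Ici (0 : ℝ), HasDerivWithinAt r (r' t) (Ici 0) t
  contDeriv : ContinuousOn r' (Ici 0)
  eq_left : ∀ t ∈ Ici (0 : ℝ), r' t = -(D * r t) - ∫ s in (0 : ℝ)..t, γ (t - s) * r s
  eq_right : ∀ t ∈ Ici (0 : ℝ), r' t = -(r t * D) - ∫ s in (0 : ℝ)..t, r (t - s) * γ s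

theorem ContinuousOn.isBounded_image_Ici_of_tendsto {α E : Type*} [LinearOrder α]
    [TopologicalSpace α] [CompactIccSpace α] [PseudoMetricSpace E] {f : α → E} {a : α} {y : E}
    (hf : ContinuousOn f (Ici a)) (hlim : Tendsto f atTop (𝓝 y)) :
    Bornology.IsBounded (f '' Ici a) := by
  have : Nonempty α := ⟨a⟩
  obtain ⟨s, hs, hs_bdd⟩ := Metric.exists_isBounded_image_of_tendsto hlim
  obtain ⟨T, hT⟩ := mem_atTop_sets.1 hs
  have hIcc : Bornology.IsBounded (f '' Icc a T) :=
    (isCompact_Icc.image_of_continuousOn (hf.mono Icc_subset_Ici_self)).isBounded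
  refine (hIcc.union hs_bdd).subset ?_
  rintro _ ⟨t, ht, rfl⟩
  rcases le_total t T with htT | hTt
  · exact Or.inl ⟨t, ⟨ht, htT⟩, rfl⟩
  · exact Or.inr ⟨t, hT t hTt, rfl⟩

theorem memLp_two_of_integrable_of_ae_norm_le {α E : Type*} [MeasurableSpace α] {μ : Measure α}
    [NormedAddCommGroup E] {f : α → E} (hf : Integrable f μ) (C : ℝ)
    (hC : ∀ᵐ x ∂μ, ‖f x‖ ≤ C) : MemLp f 2 μ := by
  rw [memLp_two_iff_integrable_sq_norm hf.aestronglyMeasurable]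
  refine (hf.norm.const_mul C).mono' (hf.aestronglyMeasurable.norm.pow 2) ?_
  filter_upwards [hC] with x hx
  rw [Real.norm_of_nonneg (sq_nonneg _), sq]
  exact mul_le_mul_of_nonneg_right hx (norm_nonneg _)

section Convolution

open scoped Convolution

variable {G E E' F : Type*} [NormedAddCommGroup E] [NormedAddCommGroup E'] [NormedAddCommGroup F]
  [NormedSpace ℝ E] [NormedSpace ℝ E'] [NormedSpace ℝ F]

theorem integral_norm_convolution_le [AddGroup G] [MeasurableSpace G] [MeasurableAdd₂ G]
    [MeasurableNeg G] {μ : Measure G} [SFinite μ] [μ.IsAddRightInvariant] {f : G → E} {g : G → E'}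
    (L : E →L[ℝ] E' →L[ℝ] F) (hf : Integrable f μ) (hg : Integrable g μ) :
    ∫ x, ‖(f ⋆[L, μ] g) x‖ ∂μ ≤ ‖L‖ * ((∫ x, ‖f x‖ ∂μ) * ∫ x, ‖g x‖ ∂μ) := by
  set M := ContinuousLinearMap.mul ℝ ℝ
  have hpointwise : ∀ᵐ x ∂μ,
      ‖(f ⋆[L, μ] g) x‖ ≤ ‖L‖ * ((fun t ↦ ‖f t‖) ⋆[M, μ] fun t ↦ ‖g t‖) x := by
    filter_upwards [hf.norm.ae_convolution_exists M hg.norm] with x hx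
    rw [convolution_def, convolution_def, ← integral_const_mul]
    refine (norm_integral_le_integral_norm _).trans <|
      integral_mono_of_nonneg (ae_of_all _ fun _ ↦ norm_nonneg _) (hx.integrable.const_mul _)
        (ae_of_all _ fun t ↦ ?_)
    simpa only [M, ContinuousLinearMap.mul_apply', mul_assoc] using L.le_opNorm₂ (f t) (g (x - t))
  calc ∫ x, ‖(f ⋆[L, μ] g) x‖ ∂μ
      ≤ ∫ x, ‖L‖ * ((fun t ↦ ‖f t‖) ⋆[M, μ] fun t ↦ ‖g t‖) x ∂μ :=
        integral_mono_ae (hf.integrable_convolution L hg).norm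
          ((hf.norm.integrable_convolution M hg.norm).const_mul _) hpointwise
    _ = ‖L‖ * ((∫ x, ‖f x‖ ∂μ) * ∫ x, ‖g x‖ ∂μ) := by
        rw [integral_const_mul, integral_convolution M hf.norm hg.norm]
        rfl

theorem integral_norm_posConvolution_le {f : ℝ → E} {g : ℝ → E'} (L : E →L[ℝ] E' →L[ℝ] F)
    (hf : IntegrableOn f (Ioi 0)) (hg : IntegrableOn g (Ioi 0)) :
    ∫ x in Ioi 0, ‖posConvolution f g L volume x‖ ≤
      ‖L‖ * ((∫ x in Ioi 0, ‖f x‖) * ∫ x in Ioi 0, ‖g x‖) := by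
  have hconv := integrable_posConvolution hf hg L
  rw [← integrable_indicator_iff measurableSet_Ioi] at hf hg
  calc ∫ x in Ioi 0, ‖posConvolution f g L volume x‖
      ≤ ∫ x, ‖posConvolution f g L volume x‖ :=
        setIntegral_le_integral hconv.norm (ae_of_all _ fun _ ↦ norm_nonneg _)
    _ ≤ ‖L‖ * ((∫ x, ‖(Ioi 0).indicator f x‖) * ∫ x, ‖(Ioi 0).indicator g x‖) := by
        rw [posConvolution_eq_convolution_indicator f g L volume]
        exact integral_norm_convolution_le L hf hg
    _ = ‖L‖ * ((∫ x in Ioi 0, ‖f x‖) * ∫ x in Ioi 0, ‖g x‖) := by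
        simp only [norm_indicator_eq_indicator_norm, integral_indicator measurableSet_Ioi]

end Convolution

namespace IsDiffResolvent

variable {d : ℕ} {D : Matrix (Fin d) (Fin d) ℝ} {γ r r' : ℝ → Matrix (Fin d) (Fin d) ℝ}

theorem hasDerivAt (hr : IsDiffResolvent D γ r r') {t : ℝ} (ht : 0 < t) :
    HasDerivAt r (r' t) t :=
  (hr.hasDeriv t ht.le).hasDerivAt (Ici_mem_nhds ht)

theorem continuousOn (hr : IsDiffResolvent D γ r r') : ContinuousOn r (Ici 0) :=
  fun t ht ↦ (hr.hasDeriv t ht).continuousWithinAt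

theorem eqOn_posConvolution (hr : IsDiffResolvent D γ r r') :
    EqOn r' (fun t ↦ -(D * r t) - posConvolution r γ (ContinuousLinearMap.mul ℝ _).flip volume t)
      (Ioi 0) := fun t ht ↦ by
  simp only [hr.eq_left t (Ioi_subset_Ici_self ht), posConvolution, indicator_of_mem ht]
  rfl

theorem integrableOn_deriv (hr : IsDiffResolvent D γ r r') (hγ : IntegrableOn γ (Ioi 0))
    (hrL1 : IntegrableOn r (Ioi 0)) : IntegrableOn r' (Ioi 0) :=
  IntegrableOn.congr_fun
    ((hrL1.const_mul D).neg.sub (integrable_posConvolution hrL1 hγ _).integrableOn)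
    hr.eqOn_posConvolution.symm measurableSet_Ioi

theorem integral_norm_deriv_le (hr : IsDiffResolvent D γ r r') (hγ : IntegrableOn γ (Ioi 0))
    (hrL1 : IntegrableOn r (Ioi 0)) :
    ∫ t in Ioi 0, ‖r' t‖ ≤
      ‖D‖ * (∫ t in Ioi 0, ‖r t‖) + (∫ t in Ioi 0, ‖γ t‖) * ∫ t in Ioi 0, ‖r t‖ := by
  set L := (ContinuousLinearMap.mul ℝ (Matrix (Fin d) (Fin d) ℝ)).flip
  set c := posConvolution r γ L volume
  have hc : IntegrableOn c (Ioi 0) := (integrable_posConvolution hrL1 hγ L).integrableOn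
  have hc_norm : ∫ t in Ioi 0, ‖c t‖ ≤ (∫ t in Ioi 0, ‖γ t‖) * ∫ t in Ioi 0, ‖r t‖ := by
    have hL : ‖L‖ ≤ 1 := by
      rw [ContinuousLinearMap.opNorm_flip]
      exact ContinuousLinearMap.opNorm_mul_le ℝ _
    calc ∫ t in Ioi 0, ‖c t‖ ≤ ‖L‖ * ((∫ t in Ioi 0, ‖r t‖) * ∫ t in Ioi 0, ‖γ t‖) :=
          integral_norm_posConvolution_le L hrL1 hγ
      _ ≤ (∫ t in Ioi 0, ‖γ t‖) * ∫ t in Ioi 0, ‖r t‖ := by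
          rw [mul_comm (∫ t in Ioi 0, ‖r t‖)]
          exact mul_le_of_le_one_left
            (mul_nonneg (integral_nonneg fun _ ↦ norm_nonneg _)
              (integral_nonneg fun _ ↦ norm_nonneg _)) hL
  calc ∫ t in Ioi 0, ‖r' t‖ = ∫ t in Ioi 0, ‖-(D * r t) - c t‖ :=
        setIntegral_congr_fun measurableSet_Ioi fun t ht ↦ by rw [hr.eqOn_posConvolution ht]
    _ ≤ ∫ t in Ioi 0, (‖D‖ * ‖r t‖ + ‖c t‖) := by
        refine integral_mono ((hrL1.const_mul D).neg.sub hc).norm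
          ((hrL1.norm.const_mul ‖D‖).add hc.norm) fun t ↦ ?_
        calc ‖-(D * r t) - c t‖ ≤ ‖D * r t‖ + ‖c t‖ := by
              simpa only [norm_neg] using norm_sub_le (-(D * r t)) (c t)
          _ ≤ ‖D‖ * ‖r t‖ + ‖c t‖ := by gcongr; exact norm_mul_le D (r t)
    _ ≤ ‖D‖ * (∫ t in Ioi 0, ‖r t‖) + (∫ t in Ioi 0, ‖γ t‖) * ∫ t in Ioi 0, ‖r t‖ := by
        rw [integral_add (hrL1.norm.const_mul ‖D‖) hc.norm, integral_const_mul]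
        gcongr

end IsDiffResolvent

theorem resolvent_integrable_consequences_general {d : ℕ}
    (D : Matrix (Fin d) (Fin d) ℝ)
    (γ r r' : ℝ → Matrix (Fin d) (Fin d) ℝ)
    (hγ : IntegrableOn γ (Ioi 0))
    (hr : IsDiffResolvent D γ r r')
    (hrL1 : IntegrableOn r (Ioi 0)) :
    (IntegrableOn r' (Ioi 0) ∧
      (∫ t in Ioi (0 : ℝ), ‖r' t‖) ≤
        ‖D‖ * (∫ t in Ioi (0 : ℝ), ‖r t‖) +
          (∫ t in Ioi (0 : ℝ), ‖γ t‖) * (∫ t in Ioi (0 : ℝ), ‖r t‖)) ∧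
    Tendsto r atTop (nhds 0) ∧
    (∃ C : ℝ, ∀ t ∈ Ici (0 : ℝ), ‖r t‖ ≤ C) ∧
    MemLp r 2 (volume.restrict (Ioi 0)) := by
  have hr' := hr.integrableOn_deriv hγ hrL1
  have hlim : Tendsto r atTop (𝓝 0) :=
    tendsto_zero_of_hasDerivAt_of_integrableOn_Ioi (fun _ ↦ hr.hasDerivAt) hr' hrL1
  obtain ⟨C, hC⟩ := isBounded_iff_forall_norm_le.1
    (hr.continuousOn.isBounded_image_Ici_of_tendsto hlim)
  have hbound : ∀ t ∈ Ici (0 : ℝ), ‖r t‖ ≤ C := fun t ht ↦ hC _ (mem_image_of_mem r ht)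
  refine ⟨⟨hr', hr.integral_norm_deriv_le hγ hrL1⟩, hlim, ⟨C, hbound⟩, ?_⟩
  exact memLp_two_of_integrable_of_ae_norm_le hrL1 C <| (ae_restrict_iff' measurableSet_Ioi).2 <|
    ae_of_all _ fun t ht ↦ hbound t (Ioi_subset_Ici_self ht)

/-- if `γ ∈ L¹(0,∞)` and the differential resolvent `r` is integrable on
`(0,∞)`, then (a) `r' ∈ L¹(0,∞)` with `‖r'‖_{L¹} ≤ ‖D‖₂ ‖r‖_{L¹} + ‖γ‖_{L¹} ‖r‖_{L¹}`,
(b) `r(t) → 0` as `t → ∞`, (c) `r` is bounded on `[0,∞)`, and (d) `r ∈ L²(0,∞)`.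
Here `‖·‖` is the spectral (ℓ²-operator) norm on matrices. -/
theorem resolvent_integrable_consequences {d : ℕ} (hd : 1 ≤ d)
    (D : Matrix (Fin d) (Fin d) ℝ)
    (γ r r' : ℝ → Matrix (Fin d) (Fin d) ℝ)
    (hγ : IntegrableOn γ (Ioi 0))
    (hr : IsDiffResolvent D γ r r')
    (hrL1 : IntegrableOn r (Ioi 0)) :
    (IntegrableOn r' (Ioi 0) ∧
      (∫ t in Ioi (0 : ℝ), ‖r' t‖) ≤
        ‖D‖ * (∫ t in Ioi (0 : ℝ), ‖r t‖) +
          (∫ t in Ioi (0 : ℝ), ‖γ t‖) * (∫ t in Ioi (0 : ℝ), ‖r t‖)) ∧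
    Tendsto r atTop (nhds 0) ∧
    (∃ C : ℝ, ∀ t ∈ Ici (0 : ℝ), ‖r t‖ ≤ C) ∧
    MemLp r 2 (volume.restrict (Ioi 0)) :=
  resolvent_integrable_consequences_general D γ r r' hγ hr hrL1
end
end

section
/- Let d ≥ 1, D ∈ ℝ^{d×d}, let γ : (0,∞) → ℝ^{d×d} be locally integrable, let Σ ∈ ℝ^{d×d}, and let r be the differential resolvent of γ with drift matrix D. Then for all s, t ≥ 0 there holds ∫₀^s ∫_{τ′}^{s+t} r(s+t−τ) γ(τ−τ′) Σ r(s−τ′)ᵀ dτ dτ′ = −∫₀^s r(s+t−τ) D Σ r(s−τ)ᵀ dτ − ∫₀^s r′(s+t−τ) Σ r(s−τ)ᵀ dτ. -/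
open MeasureTheory Matrix Set Filter
open scoped Matrix.Norms.L2Operator Real Topology ComplexOrder

noncomputable section

theorem intervalIntegral.integral_mul_const_of_intervalIntegrable {A : Type*}
    [NonUnitalNormedRing A] [NormedSpace ℝ A] [IsScalarTower ℝ A A] [SMulCommClass ℝ A A]
    {f : ℝ → A} {a b : ℝ} {μ : Measure ℝ} (hf : IntervalIntegrable f μ a b) (c : A) :
    ∫ x in a..b, f x * c ∂μ = (∫ x in a..b, f x ∂μ) * c := by
  simp only [intervalIntegral, integral_mul_const_of_integrable hf.1,
    integral_mul_const_of_integrable hf.2, sub_mul]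

theorem ContinuousOn.comp_const_sub_of_le {E : Type*} [TopologicalSpace E] {f : ℝ → E}
    (hf : ContinuousOn f (Ici 0)) {a b c : ℝ} (hbc : b ≤ c) :
    ContinuousOn (fun x => f (c - x)) (Icc a b) :=
  hf.comp (by fun_prop) fun x hx => by simp only [mem_Ici]; linarith [hx.2]

namespace IsDiffResolvent

variable {d : ℕ} {D : Matrix (Fin d) (Fin d) ℝ} {γ r r' : ℝ → Matrix (Fin d) (Fin d) ℝ}

theorem integral_mul_kernel (hr : IsDiffResolvent D γ r r') {T : ℝ} (hT : 0 ≤ T) :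
    ∫ u in (0 : ℝ)..T, r (T - u) * γ u = -(r T * D) - r' T := by
  rw [hr.eq_right T hT]
  abel

theorem intervalIntegrable_mul_kernel (hr : IsDiffResolvent D γ r r')
    (hγ : ∀ T > (0 : ℝ), IntegrableOn γ (Ioc 0 T)) {T : ℝ} (hT : 0 ≤ T) :
    IntervalIntegrable (fun u => r (T - u) * γ u) volume 0 T := by
  rcases hT.eq_or_lt with rfl | hT
  · exact IntervalIntegrable.refl
  · have hγT : IntervalIntegrable γ volume 0 T :=
      (intervalIntegrable_iff_integrableOn_Ioc_of_le hT.le).mpr (hγ T hT)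
    refine hγT.continuousOn_mul ?_
    rw [uIcc_of_le hT.le]
    exact hr.continuousOn.comp_const_sub_of_le le_rfl

/-- The substitution `u = τ - a` turns the integral into the convolution `∫₀^{b-a} r(b-a-u) γ(u) du`
of the right resolvent equation. -/
theorem integral_mul_kernel_sub_mul (hr : IsDiffResolvent D γ r r')
    (hγ : ∀ T > (0 : ℝ), IntegrableOn γ (Ioc 0 T)) {a b : ℝ} (hab : a ≤ b)
    (C : Matrix (Fin d) (Fin d) ℝ) :
    ∫ τ in a..b, r (b - τ) * γ (τ - a) * C = (-(r (b - a) * D) - r' (b - a)) * C := by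
  have hshift : ∀ τ, r (b - τ) * γ (τ - a) * C = r (b - a - (τ - a)) * γ (τ - a) * C :=
    fun τ => by rw [sub_sub_sub_cancel_right]
  simp_rw [hshift]
  rw [intervalIntegral.integral_comp_sub_right (fun u => r (b - a - u) * γ u * C), sub_self,
    intervalIntegral.integral_mul_const_of_intervalIntegrable
      (hr.intervalIntegrable_mul_kernel hγ (sub_nonneg.mpr hab)),
    hr.integral_mul_kernel (sub_nonneg.mpr hab)]

end IsDiffResolvent

theorem double_integral_positive_part_general {d : ℕ}
    (D : Matrix (Fin d) (Fin d) ℝ)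
    (γ r r' : ℝ → Matrix (Fin d) (Fin d) ℝ)
    (hγ : ∀ T > (0 : ℝ), IntegrableOn γ (Ioc 0 T))
    (S : Matrix (Fin d) (Fin d) ℝ)
    (hr : IsDiffResolvent D γ r r') :
    ∀ s ∈ Ici (0 : ℝ), ∀ t ∈ Ici (0 : ℝ),
      (∫ τ' in (0 : ℝ)..s, ∫ τ in τ'..(s + t),
          r (s + t - τ) * γ (τ - τ') * S * (r (s - τ'))ᵀ) =
        -(∫ τ in (0 : ℝ)..s, r (s + t - τ) * D * S * (r (s - τ))ᵀ) -
          ∫ τ in (0 : ℝ)..s, r' (s + t - τ) * S * (r (s - τ))ᵀ := by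
  intro s hs t ht
  simp only [mem_Ici] at hs ht
  have hinner : ∀ τ' ∈ uIcc 0 s, (∫ τ in τ'..(s + t),
      r (s + t - τ) * γ (τ - τ') * S * (r (s - τ'))ᵀ) =
        -(r (s + t - τ') * D * S * (r (s - τ'))ᵀ) - r' (s + t - τ') * S * (r (s - τ'))ᵀ := by
    intro τ' hτ'
    rw [uIcc_of_le hs] at hτ'
    simp_rw [mul_assoc _ S]
    rw [hr.integral_mul_kernel_sub_mul hγ (by linarith [hτ'.2])]
    noncomm_ring
  have hrc := hr.continuousOn.comp_const_sub_of_le (a := 0) (le_add_of_nonneg_right ht : s ≤ s + t)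
  have hr'c := hr.contDeriv.comp_const_sub_of_le (a := 0) (le_add_of_nonneg_right ht : s ≤ s + t)
  have hrTc : ContinuousOn (fun τ => (r (s - τ))ᵀ) (Icc 0 s) :=
    continuous_id.matrix_transpose.comp_continuousOn (hr.continuousOn.comp_const_sub_of_le le_rfl)
  have hDint : IntervalIntegrable (fun τ => r (s + t - τ) * D * S * (r (s - τ))ᵀ) volume 0 s :=
    (((hrc.mul continuousOn_const).mul continuousOn_const).mul hrTc).intervalIntegrable_of_Icc hs
  have hr'int : IntervalIntegrable (fun τ => r' (s + t - τ) * S * (r (s - τ))ᵀ) volume 0 s :=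
    ((hr'c.mul continuousOn_const).mul hrTc).intervalIntegrable_of_Icc hs
  rw [intervalIntegral.integral_congr hinner, ← intervalIntegral.integral_neg]
  exact intervalIntegral.integral_sub hDint.neg hr'int

/-- the identity for the "positive part" double integral
`∫₀^s ∫_{τ′}^{s+t} r(s+t-τ) γ(τ-τ′) Σ r(s-τ′)ᵀ dτ dτ′
  = -∫₀^s r(s+t-τ) D Σ r(s-τ)ᵀ dτ - ∫₀^s r′(s+t-τ) Σ r(s-τ)ᵀ dτ`. -/
theorem double_integral_positive_part {d : ℕ} (hd : 1 ≤ d)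
    (D : Matrix (Fin d) (Fin d) ℝ)
    (γ r r' : ℝ → Matrix (Fin d) (Fin d) ℝ)
    (hγ : ∀ T > (0 : ℝ), IntegrableOn γ (Ioc 0 T))
    (S : Matrix (Fin d) (Fin d) ℝ)
    (hr : IsDiffResolvent D γ r r') :
    ∀ s ∈ Ici (0 : ℝ), ∀ t ∈ Ici (0 : ℝ),
      (∫ τ' in (0 : ℝ)..s, ∫ τ in τ'..(s + t),
          r (s + t - τ) * γ (τ - τ') * S * (r (s - τ'))ᵀ) =
        -(∫ τ in (0 : ℝ)..s, r (s + t - τ) * D * S * (r (s - τ))ᵀ) -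
          ∫ τ in (0 : ℝ)..s, r' (s + t - τ) * S * (r (s - τ))ᵀ :=
  double_integral_positive_part_general D γ r r' hγ S hr
end
end
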